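/- arXiv:2509.04196 — 4 statements merged into one kernel-verified Lean document; each statement's English description precedes it below -/
import Mathlib

section
/- If M is an n×n complex matrix such that the real part of every entry of M^k is strictly positive for all k ≥ k₀ (some k₀), then the real part of every entry of e^{Mt} is strictly positive for all sufficiently large t ≥ t₀. -/
open Matrix NormedSpace
open scoped Nat

section Aux

attribute [local instance] Matrix.linftyOpNormedRing Matrix.linftyOpNormedAlgebra

theorem aux_summable_norm {n : ℕ} (A : Matrix (Fin n) (Fin n) ℂ) (i j : Fin n) :
    Summable fun k : ℕ => ‖((k !⁻¹ : ℂ) • A ^ k) i j‖ := by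
  refine (NormedSpace.norm_expSeries_summable' (𝕂 := ℂ) A).of_nonneg_of_le
    (fun _ => norm_nonneg _) fun k => ?_
  set B := (k !⁻¹ : ℂ) • A ^ k
  calc ‖B i j‖ ≤ ∑ j', ‖B i j'‖ :=
        Finset.single_le_sum (fun _ _ => norm_nonneg _) (Finset.mem_univ j)
    _ ≤ ‖B‖ := by
        rw [Matrix.linfty_opNorm_def]
        have : (∑ j', ‖B i j'‖₊ : NNReal) ≤ Finset.univ.sup fun i' => ∑ j', ‖B i' j'‖₊ :=
          Finset.le_sup (f := fun i' => ∑ j', ‖B i' j'‖₊) (Finset.mem_univ i)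
        calc (∑ j', ‖B i j'‖) = ((∑ j', ‖B i j'‖₊ : NNReal) : ℝ) := by push_cast; rfl
          _ ≤ _ := by exact_mod_cast this

end Aux

theorem aux_summable {n : ℕ} (A : Matrix (Fin n) (Fin n) ℂ) (i j : Fin n) :
    Summable fun k : ℕ => ((k !⁻¹ : ℂ) • A ^ k) i j :=
  (aux_summable_norm A i j).of_norm

theorem exp_entry {n : ℕ} (A : Matrix (Fin n) (Fin n) ℂ) (i j : Fin n) :
    (NormedSpace.exp A) i j = ∑' k : ℕ, ((k !⁻¹ : ℂ) • A ^ k) i j := by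
  have h1 : HasSum (fun k : ℕ => (k !⁻¹ : ℂ) • A ^ k)
      (Matrix.of fun i j => ∑' k : ℕ, ((k !⁻¹ : ℂ) • A ^ k) i j) := by
    apply Pi.hasSum.mpr
    intro i'
    rw [Pi.hasSum]
    intro j'
    exact (aux_summable A i' j').hasSum
  rw [NormedSpace.exp_eq_tsum (𝕂 := ℂ)]
  show (∑' k : ℕ, (k !⁻¹ : ℂ) • A ^ k) i j = _
  rw [h1.tsum_eq]
  rfl


/-- If `M` is real eventually positive (the real part of every entry of
`M ^ k` is strictly positive for all `k ≥ k₀`), then `M` is real eventually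
exponentially positive: the real part of every entry of `exp (t • M)` is strictly
positive for all sufficiently large `t`. -/
theorem rEP_implies_rEEP {n : ℕ} (M : Matrix (Fin n) (Fin n) ℂ)
    (hEP : ∃ k₀ : ℕ, ∀ k ≥ k₀, ∀ i j, 0 < ((M ^ k) i j).re) :
    ∃ t₀ : ℝ, 0 < t₀ ∧ ∀ t : ℝ, t ≥ t₀ → ∀ i j,
      0 < ((NormedSpace.exp (t • M)) i j).re := by
  obtain ⟨a, ha⟩ := hEP
  by_cases hn : n = 0
  · subst hn
    exact ⟨1, one_pos, fun t _ i _ => i.elim0⟩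
  haveI : NeZero n := ⟨hn⟩
  -- the minimum of the real parts of the entries of `M ^ (a+1)`
  set ε : ℝ := Finset.univ.inf' Finset.univ_nonempty
      (fun p : Fin n × Fin n => ((M ^ (a + 1)) p.1 p.2).re) with hεdef
  have hε : 0 < ε := by
    rw [hεdef, Finset.lt_inf'_iff]
    exact fun p _ => ha (a + 1) (Nat.le_succ a) p.1 p.2
  have hεle : ∀ i j, ε ≤ ((M ^ (a + 1)) i j).re := fun i j =>
    Finset.inf'_le _ (Finset.mem_univ (i, j))
  set C : ℝ := ∑ k ∈ Finset.range (a + 1), ∑ i', ∑ j', |((M ^ k) i' j').re| with hCdef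
  have hC0 : 0 ≤ C := by positivity
  refine ⟨max 1 ((C + 1) * ((a + 1)! : ℝ) / ε), lt_of_lt_of_le one_pos (le_max_left _ _),
    fun t ht i j => ?_⟩
  have ht1 : 1 ≤ t := le_trans (le_max_left _ _) ht
  have ht0 : (0:ℝ) < t := lt_of_lt_of_le one_pos ht1
  have hP : (0:ℝ) < t ^ a := pow_pos ht0 a
  have hF : (0:ℝ) < ((a + 1)! : ℝ) := by positivity
  have ht₀ : (C + 1) * ((a + 1)! : ℝ) / ε ≤ t := le_trans (le_max_right _ _) ht
  -- per-term real part formula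
  have hterm : ∀ k : ℕ, (((k !⁻¹ : ℂ) • (t • M) ^ k) i j).re
      = (k ! : ℝ)⁻¹ * (t ^ k * ((M ^ k) i j).re) := by
    intro k
    rw [smul_pow, Matrix.smul_apply, Matrix.smul_apply, smul_eq_mul]
    have hc : (k !⁻¹ : ℂ) = (((k ! : ℝ)⁻¹ : ℝ) : ℂ) := by push_cast; ring
    rw [hc, Complex.re_ofReal_mul, Complex.smul_re, smul_eq_mul]
  -- summability of the real parts
  have hhs := Complex.hasSum_re (aux_summable (t • M) i j).hasSum
  have hsum : Summable fun k : ℕ => (((k !⁻¹ : ℂ) • (t • M) ^ k) i j).re := hhs.summable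
  have hre : ((NormedSpace.exp (t • M)) i j).re
      = ∑' k : ℕ, (((k !⁻¹ : ℂ) • (t • M) ^ k) i j).re := by
    rw [exp_entry, Complex.re_tsum (aux_summable (t • M) i j)]
  rw [hre]
  -- the finite sum is below the tsum (tail terms are nonneg)
  have hfin : ∑ k ∈ Finset.range (a + 2), (((k !⁻¹ : ℂ) • (t • M) ^ k) i j).re
      ≤ ∑' k : ℕ, (((k !⁻¹ : ℂ) • (t • M) ^ k) i j).re := by
    refine Summable.sum_le_tsum _ (fun k hk => ?_) hsum
    rw [hterm k]
    have hk' : a ≤ k := by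
      simp only [Finset.mem_range, not_lt] at hk; omega
    have hre' := (ha k hk' i j).le
    have : (0:ℝ) ≤ t ^ k := (pow_pos ht0 k).le
    positivity
  -- head bound
  have hpoint : ∀ k : ℕ, |((M ^ k) i j).re| ≤ ∑ i', ∑ j', |((M ^ k) i' j').re| := by
    intro k
    refine le_trans (Finset.single_le_sum (f := fun j' => |((M ^ k) i j').re|)
      (fun _ _ => abs_nonneg _) (Finset.mem_univ j)) ?_
    exact Finset.single_le_sum (f := fun i' => ∑ j', |((M ^ k) i' j').re|)
      (fun _ _ => Finset.sum_nonneg fun _ _ => abs_nonneg _) (Finset.mem_univ i)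
  have hsumC : ∑ k ∈ Finset.range (a + 1), |((M ^ k) i j).re| ≤ C :=
    Finset.sum_le_sum fun k _ => hpoint k
  have hhead : -(C * t ^ a)
      ≤ ∑ k ∈ Finset.range (a + 1), (((k !⁻¹ : ℂ) • (t • M) ^ k) i j).re := by
    have h1 : ∀ k ∈ Finset.range (a + 1),
        -(t ^ a * |((M ^ k) i j).re|) ≤ (((k !⁻¹ : ℂ) • (t • M) ^ k) i j).re := by
      intro k hk
      rw [hterm k]
      have hk' : k ≤ a := by simpa [Nat.lt_succ_iff] using hk
      have h2 : |(k ! : ℝ)⁻¹ * (t ^ k * ((M ^ k) i j).re)| ≤ t ^ a * |((M ^ k) i j).re| := by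
        rw [abs_mul, abs_mul]
        have hinv : |(k ! : ℝ)⁻¹| ≤ 1 := by
          rw [abs_of_nonneg (by positivity)]
          exact inv_le_one_of_one_le₀ (by exact_mod_cast Nat.one_le_iff_ne_zero.mpr k.factorial_ne_zero)
        have htk : |t ^ k| ≤ t ^ a := by
          rw [abs_of_nonneg (pow_nonneg ht0.le k)]
          exact pow_le_pow_right₀ ht1 hk'
        calc |(k ! : ℝ)⁻¹| * (|t ^ k| * |((M ^ k) i j).re|)
            ≤ 1 * (t ^ a * |((M ^ k) i j).re|) := by
              apply mul_le_mul hinv (mul_le_mul htk le_rfl (abs_nonneg _) hP.le)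
                (by positivity) one_pos.le
          _ = t ^ a * |((M ^ k) i j).re| := one_mul _
      linarith [neg_abs_le ((k ! : ℝ)⁻¹ * (t ^ k * ((M ^ k) i j).re))]
    calc -(C * t ^ a) = -(t ^ a * C) := by ring
      _ ≤ -(t ^ a * ∑ k ∈ Finset.range (a + 1), |((M ^ k) i j).re|) :=
          neg_le_neg (mul_le_mul_of_nonneg_left hsumC hP.le)
      _ = ∑ k ∈ Finset.range (a + 1), -(t ^ a * |((M ^ k) i j).re|) := by
          rw [Finset.mul_sum, ← Finset.sum_neg_distrib]
      _ ≤ _ := Finset.sum_le_sum h1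
  -- main term bound
  have hm : (C + 1) * t ^ a ≤ ((((a + 1)!⁻¹ : ℂ) • (t • M) ^ (a + 1)) i j).re := by
    rw [hterm (a + 1)]
    have key1 : (C + 1) * ((a + 1)! : ℝ) ≤ t * ε := by
      rw [div_le_iff₀ hε] at ht₀
      linarith
    have h1 : ε ≤ ((M ^ (a + 1)) i j).re := hεle i j
    calc (C + 1) * t ^ a
        = ((a + 1)! : ℝ)⁻¹ * (t ^ a * ((C + 1) * ((a + 1)! : ℝ))) := by
          field_simp
      _ ≤ ((a + 1)! : ℝ)⁻¹ * (t ^ a * (t * ε)) :=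
          mul_le_mul_of_nonneg_left (mul_le_mul_of_nonneg_left key1 hP.le) (by positivity)
      _ ≤ ((a + 1)! : ℝ)⁻¹ * (t ^ a * (t * ((M ^ (a + 1)) i j).re)) :=
          mul_le_mul_of_nonneg_left (mul_le_mul_of_nonneg_left
            (mul_le_mul_of_nonneg_left h1 ht0.le) hP.le) (by positivity)
      _ = ((a + 1)! : ℝ)⁻¹ * (t ^ (a + 1) * ((M ^ (a + 1)) i j).re) := by
          rw [pow_succ]; ring
  calc (0:ℝ) < t ^ a := hP
    _ = -(C * t ^ a) + (C + 1) * t ^ a := by ring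
    _ ≤ (∑ k ∈ Finset.range (a + 1), (((k !⁻¹ : ℂ) • (t • M) ^ k) i j).re)
        + ((((a + 1)!⁻¹ : ℂ) • (t • M) ^ (a + 1)) i j).re := add_le_add hhead hm
    _ = ∑ k ∈ Finset.range (a + 2), (((k !⁻¹ : ℂ) • (t • M) ^ k) i j).re :=
        (Finset.sum_range_succ _ (a + 1)).symm
    _ ≤ _ := hfin
end

section
/- If −L ∈ ℂ^{n×n} is real eventually exponentially positive (Re(exp(−Lt)) > 0 entrywise for all large t), then L is irreducible, and hence the digraph of L is strongly connected. -/
open Matrix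

lemma exp_entry_eq_zero {n : ℕ} (A : Matrix (Fin n) (Fin n) ℂ) (i j : Fin n)
    (h : ∀ k : ℕ, (A ^ k) i j = 0) : NormedSpace.exp A i j = 0 := by
  letI : SeminormedRing (Matrix (Fin n) (Fin n) ℂ) := Matrix.linftyOpSemiNormedRing
  letI : NormedRing (Matrix (Fin n) (Fin n) ℂ) := Matrix.linftyOpNormedRing
  letI : NormedAlgebra ℂ (Matrix (Fin n) (Fin n) ℂ) := Matrix.linftyOpNormedAlgebra
  have hsum : Summable fun k : ℕ => (((k.factorial : ℂ)))⁻¹ • A ^ k :=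
    NormedSpace.expSeries_summable' A
  rw [NormedSpace.exp_eq_tsum (𝕂 := ℂ)]
  have h1 : Summable fun k : ℕ => ((((k.factorial : ℂ)))⁻¹ • A ^ k) i := by
    exact (hsum.map (ContinuousLinearMap.proj (R := ℂ) (φ := fun _ : Fin n => Fin n → ℂ) i)
      (ContinuousLinearMap.proj i).continuous : _)
  calc (∑' k : ℕ, (((k.factorial : ℂ)))⁻¹ • A ^ k) i j
      = ∑' k : ℕ, ((((k.factorial : ℂ)))⁻¹ • A ^ k) i j := by
        erw [tsum_apply hsum, tsum_apply h1]
    _ = 0 := by simp [Matrix.smul_apply, h]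

/-- If `-L` is real eventually exponentially positive, then `L` is
irreducible (no permutation puts it in block upper triangular form with a
nontrivial zero lower-left block), and hence the digraph of `L` is strongly
connected. -/
theorem irreducible_of_neg_rEEP {n : ℕ} (hn : 2 ≤ n) (L : Matrix (Fin n) (Fin n) ℂ)
    (hEEP : ∃ t₀ : ℝ, ∀ t : ℝ, t ≥ t₀ → ∀ i j,
      0 < ((NormedSpace.exp (t • (-L))) i j).re) :
    (¬ ∃ (e : Equiv.Perm (Fin n)) (r : ℕ), 0 < r ∧ r < n ∧
        ∀ i j : Fin n, r ≤ (i : ℕ) → (j : ℕ) < r → L.submatrix e e i j = 0) ∧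
    (∀ i j : Fin n, ∃ (m : ℕ) (f : ℕ → Fin n), f 0 = i ∧ f m = j ∧
        ∀ l < m, L (f l) (f (l + 1)) ≠ 0) := by
  obtain ⟨t₀, ht⟩ := hEEP
  set R : Fin n → Fin n → Prop := fun i j => ∃ (m : ℕ) (f : ℕ → Fin n), f 0 = i ∧ f m = j ∧
      ∀ l < m, L (f l) (f (l + 1)) ≠ 0 with hRdef
  have hrefl : ∀ i, R i i :=
    fun i => ⟨0, fun _ => i, rfl, rfl, fun l hl => absurd hl (Nat.not_lt_zero l)⟩
  have hstep : ∀ i x j : Fin n, L i x ≠ 0 → R x j → R i j := by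
    rintro i x j hL ⟨m, g, hg0, hgm, hg⟩
    refine ⟨m + 1, fun l => if l = 0 then i else g (l - 1), if_pos rfl, by simpa using hgm, ?_⟩
    intro l hl
    cases l with
    | zero => simpa [hg0] using hL
    | succ l => simpa using hg l (Nat.lt_of_succ_lt_succ hl)
  have hreach : ∀ i j, R i j := by
    intro i j
    by_contra hc
    have hpow : ∀ (k : ℕ) (i : Fin n), ¬ R i j → ((t₀ • (-L)) ^ k) i j = 0 := by
      intro k
      induction k with
      | zero =>
        intro i hi
        have hij : i ≠ j := fun h => hi (h ▸ hrefl i)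
        simp [Matrix.one_apply, hij]
      | succ k ih =>
        intro i hi
        rw [pow_succ', Matrix.mul_apply]
        refine Finset.sum_eq_zero fun x _ => ?_
        by_cases hL : L i x = 0
        · simp [Matrix.smul_apply, hL]
        · have hx : ¬ R x j := fun hxj => hi (hstep i x j hL hxj)
          rw [ih x hx, mul_zero]
    have h0 := ht t₀ le_rfl i j
    rw [exp_entry_eq_zero _ i j (fun k => hpow k i hc)] at h0
    simp at h0
  refine ⟨?_, hreach⟩
  rintro ⟨e, r, hr0, hrn, hz⟩
  have h0n : 0 < n := lt_of_lt_of_le (by norm_num) hn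
  obtain ⟨m, f, hf0, hfm, hf⟩ := hreach (e ⟨r, hrn⟩) (e ⟨0, h0n⟩)
  set g : ℕ → Fin n := fun l => e.symm (f l) with hg
  have hg0 : (g 0 : ℕ) = r := by simp [hg, hf0]
  have hgm : (g m : ℕ) = 0 := by simp [hg, hfm]
  have hP : ∃ l, l ≤ m ∧ ((g l : ℕ) < r) := ⟨m, le_rfl, by rw [hgm]; exact hr0⟩
  classical
  obtain ⟨k, ⟨hkm, hklt⟩, hkmin⟩ :
      ∃ k, (k ≤ m ∧ (g k : ℕ) < r) ∧ ∀ l < k, ¬ (l ≤ m ∧ (g l : ℕ) < r) :=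
    ⟨Nat.find hP, Nat.find_spec hP, fun l hl => Nat.find_min hP hl⟩
  have hk0 : k ≠ 0 := by
    intro h
    rw [h, hg0] at hklt
    exact lt_irrefl r hklt
  obtain ⟨l, rfl⟩ : ∃ l, k = l + 1 := ⟨k - 1, (Nat.succ_pred_eq_of_pos (Nat.pos_of_ne_zero hk0)).symm⟩
  have hlm : l < m := lt_of_lt_of_le (Nat.lt_succ_self l) hkm
  have hnl : ¬ (l ≤ m ∧ (g l : ℕ) < r) := hkmin l (Nat.lt_succ_self l)
  have hge : r ≤ (g l : ℕ) := by
    by_contra h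
    exact hnl ⟨le_of_lt hlm, lt_of_not_ge h⟩
  have := hz (g l) (g (l + 1)) hge hklt
  rw [Matrix.submatrix_apply] at this
  simp only [hg, Equiv.apply_symm_apply] at this
  exact hf l hlm this
end

section
/- Suppose L ∈ ℂ^{n×n} has a simple eigenvalue 0 with right eigenvector v = α𝟙ₙ (α ∈ ℂ, α ≠ 0) and left eigenvector w with wᴴv = 1, and every other eigenvalue of L has strictly positive real part. Then for every initial condition x₀ ∈ ℂⁿ, the solution x(t) = exp(−Lt)x₀ of ẋ = −Lx converges to (α wᴴ x₀) 𝟙ₙ as t → ∞; in particular, all components of x(t) converge to a common complex value (consensus). -/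
open Matrix Filter

open Nat Topology

attribute [local instance] Matrix.linftyOpNormedRing Matrix.linftyOpNormedAlgebra

variable {n : ℕ}

noncomputable def mulVecCLM (x : Fin n → ℂ) :
    Matrix (Fin n) (Fin n) ℂ →L[ℂ] (Fin n → ℂ) :=
  LinearMap.toContinuousLinearMap
    { toFun := fun B => B.mulVec x
      map_add' := fun A B => Matrix.add_mulVec A B x
      map_smul' := fun c A => Matrix.smul_mulVec c A x }

@[simp] lemma mulVecCLM_apply (x : Fin n → ℂ) (B : Matrix (Fin n) (Fin n) ℂ) :
    mulVecCLM x B = B.mulVec x := rfl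

lemma exp_mulVec (A : Matrix (Fin n) (Fin n) ℂ) (x : Fin n → ℂ) :
    (NormedSpace.exp A).mulVec x = ∑' k : ℕ, ((k ! : ℂ))⁻¹ • (A ^ k).mulVec x := by
  rw [NormedSpace.exp_eq_tsum (𝕂 := ℂ)]
  have := (mulVecCLM x).map_tsum (NormedSpace.expSeries_summable' (𝕂 := ℂ) A)
  simpa using this

lemma exp_mulVec_eq_self (A : Matrix (Fin n) (Fin n) ℂ) (x : Fin n → ℂ)
    (h : A.mulVec x = 0) : (NormedSpace.exp A).mulVec x = x := by
  rw [exp_mulVec]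
  rw [tsum_eq_single 0]
  · simp
  · intro k hk
    obtain ⟨m, rfl⟩ := Nat.exists_eq_succ_of_ne_zero hk
    rw [pow_succ, ← Matrix.mulVec_mulVec, h, Matrix.mulVec_zero, smul_zero]

lemma exp_mulVec_of_pow (B : Matrix (Fin n) (Fin n) ℂ) (x : Fin n → ℂ) (m : ℕ)
    (h : (B ^ m).mulVec x = 0) :
    (NormedSpace.exp B).mulVec x
      = ∑ k ∈ Finset.range m, ((k ! : ℂ))⁻¹ • (B ^ k).mulVec x := by
  rw [exp_mulVec]
  apply tsum_eq_sum
  intro k hk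
  rw [Finset.mem_range, not_lt] at hk
  have : B ^ k = B ^ (k - m) * B ^ m := by rw [← pow_add]; congr 1; omega
  rw [this, ← Matrix.mulVec_mulVec, h, Matrix.mulVec_zero, smul_zero]

lemma exp_smul_one_add (c : ℂ) (B : Matrix (Fin n) (Fin n) ℂ) :
    NormedSpace.exp (c • (1 : Matrix (Fin n) (Fin n) ℂ) + B)
      = Complex.exp c • NormedSpace.exp B := by
  rw [Matrix.exp_add_of_commute _ _ ((Commute.one_left B).smul_left c)]
  have h1 : NormedSpace.exp (c • (1 : Matrix (Fin n) (Fin n) ℂ)) = Complex.exp c • 1 := by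
    rw [NormedSpace.exp_eq_tsum (𝕂 := ℂ)]
    have hsum : Summable fun k : ℕ => (k ! : ℂ)⁻¹ * c ^ k := by
      simpa [smul_eq_mul] using NormedSpace.expSeries_summable' (𝕂 := ℂ) c
    calc ∑' k : ℕ, (k ! : ℂ)⁻¹ • (c • (1:Matrix (Fin n) (Fin n) ℂ)) ^ k
        = ∑' k : ℕ, ((k ! : ℂ)⁻¹ * c ^ k) • (1:Matrix (Fin n) (Fin n) ℂ) := by
          congr 1; funext k; rw [smul_pow, one_pow, smul_smul]
      _ = (∑' k : ℕ, (k ! : ℂ)⁻¹ * c ^ k) • (1:Matrix (Fin n) (Fin n) ℂ) :=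
          hsum.tsum_smul_const _
      _ = Complex.exp c • 1 := by
          congr 1
          rw [Complex.exp_eq_exp_ℂ, NormedSpace.exp_eq_tsum (𝕂 := ℂ)]
          simp [smul_eq_mul]
  rw [h1, smul_mul_assoc, one_mul]

lemma coeff_tendsto_zero {μ : ℂ} (hμ : 0 < μ.re) (k : ℕ) :
    Tendsto (fun t : ℝ => Complex.exp (-((t:ℂ) * μ)) * (k ! : ℂ)⁻¹ * (t:ℂ) ^ k) atTop (𝓝 0) := by
  rw [tendsto_zero_iff_norm_tendsto_zero]
  have key : Tendsto (fun t : ℝ => Real.exp (-(μ.re * t)) * (k ! : ℝ)⁻¹ * t ^ k) atTop (𝓝 0) := by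
    have h1 : Tendsto (fun t : ℝ => μ.re * t) atTop atTop :=
      Tendsto.const_mul_atTop hμ tendsto_id
    have h2 := (Real.tendsto_pow_mul_exp_neg_atTop_nhds_zero k).comp h1
    have h3 : Tendsto (fun t : ℝ => ((k ! : ℝ)⁻¹ / μ.re ^ k) *
        ((μ.re * t) ^ k * Real.exp (-(μ.re * t)))) atTop (𝓝 0) := by
      simpa using h2.const_mul ((k ! : ℝ)⁻¹ / μ.re ^ k)
    refine h3.congr fun t => ?_
    have hμk : μ.re ^ k ≠ 0 := pow_ne_zero k hμ.ne'
    rw [mul_pow]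
    field_simp
  refine key.congr' ?_
  filter_upwards [eventually_ge_atTop (0:ℝ)] with t ht
  have hnorm : ‖Complex.exp (-((t:ℂ) * μ)) * (k ! : ℂ)⁻¹ * (t:ℂ) ^ k‖
      = Real.exp (-(μ.re * t)) * (k ! : ℝ)⁻¹ * t ^ k := by
    rw [norm_mul, norm_mul, norm_pow, norm_inv, Complex.norm_exp, Complex.norm_natCast, Complex.norm_real,
      Real.norm_of_nonneg ht]
    congr 2
    simp [mul_comm]
  rw [hnorm]

lemma tendsto_exp_neg_smul_mulVec (N : Matrix (Fin n) (Fin n) ℂ) (μ : ℂ) (hμ : 0 < μ.re)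
    (x : Fin n → ℂ) (m : ℕ) (h : ((N - μ • 1) ^ m).mulVec x = 0) :
    Tendsto (fun t : ℝ => (NormedSpace.exp (t • (-N))).mulVec x) atTop (𝓝 0) := by
  have hsub : ((μ • 1 - N) ^ m).mulVec x = 0 := by
    rw [show μ • (1 : Matrix (Fin n) (Fin n) ℂ) - N = -(N - μ • 1) by rw [neg_sub], neg_pow,
      ← Matrix.mulVec_mulVec, h, Matrix.mulVec_zero]
  have key : ∀ t : ℝ, (NormedSpace.exp (t • (-N))).mulVec x
      = ∑ k ∈ Finset.range m,
          (Complex.exp (-((t:ℂ) * μ)) * (k ! : ℂ)⁻¹ * (t:ℂ) ^ k) •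
            ((μ • 1 - N) ^ k).mulVec x := by
    intro t
    have hsplit : t • (-N) = (-((t:ℂ) * μ)) • (1 : Matrix (Fin n) (Fin n) ℂ)
        + (t:ℂ) • (μ • 1 - N) := by
      ext i j
      by_cases hij : i = j <;>
        simp [hij, Matrix.smul_apply, Matrix.sub_apply, Matrix.one_apply, Matrix.neg_apply,
          Matrix.add_apply, smul_eq_mul, Complex.real_smul] <;> ring
    have hBm : (((t:ℂ) • (μ • 1 - N)) ^ m).mulVec x = 0 := by
      rw [smul_pow, Matrix.smul_mulVec, hsub, smul_zero]
    rw [hsplit, exp_smul_one_add, Matrix.smul_mulVec, exp_mulVec_of_pow _ x m hBm,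
      Finset.smul_sum]
    refine Finset.sum_congr rfl fun k _ => ?_
    rw [smul_pow, Matrix.smul_mulVec, smul_smul, smul_smul, mul_assoc]
  have hterm : ∀ k, Tendsto (fun t : ℝ =>
      (Complex.exp (-((t:ℂ) * μ)) * (k ! : ℂ)⁻¹ * (t:ℂ) ^ k) • ((μ • 1 - N) ^ k).mulVec x)
      atTop (𝓝 (0 : Fin n → ℂ)) := fun k => by
    simpa using (coeff_tendsto_zero hμ k).smul_const (((μ • 1 - N) ^ k).mulVec x)
  have hsum := tendsto_finset_sum (Finset.range m) (fun k _ => hterm k)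
  rw [Finset.sum_const_zero] at hsum
  exact hsum.congr fun t => (key t).symm

lemma tendsto_zero_of_eigen_pos (M : Matrix (Fin n) (Fin n) ℂ)
    (hM : ∀ (μ : ℂ) (u : Fin n → ℂ), u ≠ 0 → M.mulVec u = μ • u → 0 < μ.re)
    (x : Fin n → ℂ) :
    Tendsto (fun t : ℝ => (NormedSpace.exp (t • (-M))).mulVec x) atTop (𝓝 0) := by
  set f : Module.End ℂ (Fin n → ℂ) := Matrix.toLinAlgEquiv' M with hf
  have htop := Module.End.iSup_maxGenEigenspace_eq_top f
  have hx : x ∈ ⨆ μ : ℂ, f.maxGenEigenspace μ := htop ▸ Submodule.mem_top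
  refine Submodule.iSup_induction (motive := fun y : Fin n → ℂ =>
      Tendsto (fun t : ℝ => (NormedSpace.exp (t • (-M))).mulVec y) atTop (𝓝 0))
      _ hx ?_ ?_ ?_
  · intro μ y hy
    rcases eq_or_ne y 0 with rfl | hy0
    · simpa [Matrix.mulVec_zero] using tendsto_const_nhds
    have hne : f.maxGenEigenspace μ ≠ ⊥ := by
      intro hbot
      rw [hbot] at hy
      exact hy0 (Submodule.mem_bot ℂ |>.mp hy)
    have hev1 : f.HasUnifEigenvalue μ 1 :=
      (Module.End.hasUnifEigenvalue_iff_hasUnifEigenvalue_one (by norm_num)).mp hne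
    obtain ⟨u, hu⟩ := hev1.exists_hasUnifEigenvector
    have hμpos : 0 < μ.re := by
      refine hM μ u hu.2 ?_
      have := hu.apply_eq_smul
      simpa [hf, Matrix.toLinAlgEquiv'_apply, Matrix.toLin'_apply] using this
    obtain ⟨m, hm⟩ := (Module.End.mem_maxGenEigenspace f μ y).mp hy
    refine tendsto_exp_neg_smul_mulVec M μ hμpos y m ?_
    have hmat : ((M - μ • 1) ^ m).mulVec y = ((f - μ • 1) ^ m) y := by
      have : (Matrix.toLinAlgEquiv' (n := Fin n) (R := ℂ)) ((M - μ • 1) ^ m)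
          = (f - μ • 1) ^ m := by
        rw [map_pow, map_sub, _root_.map_smul, _root_.map_one]
      rw [← this]
      rfl
    rw [hmat, hm]
  · simpa [Matrix.mulVec_zero] using tendsto_const_nhds
  · intro y z hy hz
    have := hy.add hz
    rw [add_zero] at this
    exact this.congr fun t => by rw [Matrix.mulVec_add]
/-- If `0` is a simple eigenvalue of `L` with right eigenvector
`α•𝟙ₙ` (`α ≠ 0`) and left eigenvector `w` normalized `wᴴ (α 𝟙) = 1`, and every other
eigenvalue of `L` has strictly positive real part, then the Laplacian flow
`x(t) = exp(-Lt) x₀` converges to `(α wᴴ x₀) 𝟙ₙ` — consensus. -/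
theorem laplacian_flow_consensus
    {n : ℕ} (L : Matrix (Fin n) (Fin n) ℂ) (α : ℂ) (w : Fin n → ℂ)
    (hα : α ≠ 0)
    (hv : L.mulVec (fun _ => α) = 0)
    (hw : Matrix.vecMul (star w) L = 0)
    (hnorm : star w ⬝ᵥ (fun _ => α) = 1)
    (hsimple : L.charpoly.rootMultiplicity 0 = 1)
    (hspec : ∀ μ ∈ spectrum ℂ L, μ ≠ 0 → 0 < μ.re) :
    ∀ x₀ : Fin n → ℂ,
      Tendsto (fun t : ℝ => (NormedSpace.exp (t • (-L))).mulVec x₀) atTop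
        (nhds (fun _ => α * (star w ⬝ᵥ x₀))) := by
  intro x₀
  set v : Fin n → ℂ := fun _ => α with hvdef
  set P : Matrix (Fin n) (Fin n) ℂ := Matrix.vecMulVec v (star w) with hPdef
  set M : Matrix (Fin n) (Fin n) ℂ := L + P with hMdef
  have hPx : ∀ x : Fin n → ℂ, P.mulVec x = (star w ⬝ᵥ x) • v := by
    intro x
    funext i
    simp only [hPdef, Matrix.mulVec, dotProduct, Matrix.vecMulVec_apply, Pi.smul_apply,
      smul_eq_mul, hvdef]
    rw [Finset.sum_mul]
    exact Finset.sum_congr rfl fun j _ => by ring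
  have hLP : L * P = 0 := by
    ext i j
    have h0 : L.mulVec v i = 0 := congrFun hv i
    simp only [Matrix.mulVec, dotProduct] at h0
    simp only [Matrix.mul_apply, Matrix.vecMulVec_apply, Matrix.zero_apply, hPdef]
    calc ∑ k, L i k * (v k * star w j) = (∑ k, L i k * v k) * star w j := by
          rw [Finset.sum_mul]; exact Finset.sum_congr rfl fun k _ => by ring
      _ = 0 := by rw [h0, zero_mul]
  have hPL : P * L = 0 := by
    ext i j
    have h0 : Matrix.vecMul (star w) L j = 0 := congrFun hw j
    simp only [Matrix.vecMul, dotProduct] at h0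
    simp only [Matrix.mul_apply, Matrix.vecMulVec_apply, Matrix.zero_apply, hPdef]
    calc ∑ k, v i * star w k * L k j = v i * ∑ k, star w k * L k j := by
          rw [Finset.mul_sum]; exact Finset.sum_congr rfl fun k _ => by ring
      _ = 0 := by rw [h0, mul_zero]
  have hwv : star w ⬝ᵥ v = 1 := hnorm
  have hPP : P * P = P := by
    ext i j
    simp only [Matrix.mul_apply, Matrix.vecMulVec_apply, hPdef]
    have : ∑ k, v i * star w k * (v k * star w j)
        = (v i * star w j) * ∑ k, star w k * v k := by
      rw [Finset.mul_sum]; exact Finset.sum_congr rfl fun k _ => by ring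
    rw [this]
    have h1 : ∑ k, star w k * v k = 1 := hwv
    rw [h1, mul_one]
  have hM : ∀ (μ : ℂ) (u : Fin n → ℂ), u ≠ 0 → M.mulVec u = μ • u → 0 < μ.re := by
    intro μ u hu0 hMu
    have hwP : Matrix.vecMul (star w) P = star w := by
      funext j
      simp only [Matrix.vecMul, dotProduct, Matrix.vecMulVec_apply, hPdef]
      calc ∑ k, star w k * (v k * star w j) = (∑ k, star w k * v k) * star w j := by
            rw [Finset.sum_mul]; exact Finset.sum_congr rfl fun k _ => by ring
        _ = star w j := by rw [show ∑ k, star w k * v k = 1 from hwv, one_mul]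
    have hwM : Matrix.vecMul (star w) M = star w := by
      rw [hMdef, Matrix.vecMul_add, hw, hwP, zero_add]
    have hs : star w ⬝ᵥ u = μ * (star w ⬝ᵥ u) := by
      calc star w ⬝ᵥ u = Matrix.vecMul (star w) M ⬝ᵥ u := by rw [hwM]
        _ = star w ⬝ᵥ M.mulVec u := (dotProduct_mulVec _ _ _).symm
        _ = star w ⬝ᵥ (μ • u) := by rw [hMu]
        _ = μ * (star w ⬝ᵥ u) := by rw [dotProduct_smul]; rfl
    by_cases hμ1 : μ = 1
    · rw [hμ1]; norm_num
    · have hs0 : star w ⬝ᵥ u = 0 := by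
        have h2 : (μ - 1) * (star w ⬝ᵥ u) = 0 := by
          rw [sub_mul, one_mul, ← hs, sub_self]
        rcases mul_eq_zero.mp h2 with h | h
        · exact absurd (sub_eq_zero.mp h) hμ1
        · exact h
      have hPu : P.mulVec u = 0 := by rw [hPx u, hs0, zero_smul]
      have hLu : L.mulVec u = μ • u := by
        have : M.mulVec u = L.mulVec u + P.mulVec u := Matrix.add_mulVec L P u
        rw [this, hPu, add_zero] at hMu
        exact hMu
      by_cases hμ0 : μ = 0
      · exfalso
        subst hμ0
        rw [zero_smul] at hLu
        set f : Module.End ℂ (Fin n → ℂ) := Matrix.toLinAlgEquiv' L with hfdef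
        have happly : ∀ y : Fin n → ℂ, f y = L.mulVec y := fun y => rfl
        have hfin : Module.finrank ℂ (f.maxGenEigenspace 0) = 1 := by
          have hchar : f.charpoly = L.charpoly := by
            rw [hfdef, ← LinearMap.charpoly_toMatrix (Matrix.toLinAlgEquiv' L)
              (Pi.basisFun ℂ (Fin n))]
            congr 1
            rw [LinearMap.toMatrix_eq_toMatrix']
            exact LinearMap.toMatrix'_toLin' L
          rw [f.finrank_maxGenEigenspace_eq 0, hchar, hsimple]
        have hmemu : u ∈ f.maxGenEigenspace 0 := by
          rw [Module.End.mem_maxGenEigenspace]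
          exact ⟨1, by simp [pow_one, happly u, hLu]⟩
        have hmemv : v ∈ f.maxGenEigenspace 0 := by
          rw [Module.End.mem_maxGenEigenspace]
          exact ⟨1, by simp [pow_one, happly v, hv]⟩
        have hindep : LinearIndependent ℂ ![u, v] := by
          rw [LinearIndependent.pair_iff]
          intro s t hst
          have hdot : star w ⬝ᵥ (s • u + t • v) = 0 := by rw [hst, dotProduct_zero]
          rw [dotProduct_add, dotProduct_smul, dotProduct_smul, hs0, hwv,
            smul_zero, zero_add, smul_eq_mul, mul_one] at hdot
          refine ⟨?_, hdot⟩
          rw [hdot, zero_smul, add_zero] at hst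
          exact (smul_eq_zero.mp hst).resolve_right hu0
        have hle : Submodule.span ℂ (Set.range ![u, v]) ≤ f.maxGenEigenspace 0 := by
          rw [Submodule.span_le, Set.range_subset_iff]
          intro i
          fin_cases i
          · exact hmemu
          · exact hmemv
        have h2 : (2 : ℕ) ≤ 1 := by
          calc (2:ℕ) = Module.finrank ℂ (Submodule.span ℂ (Set.range ![u, v])) := by
                rw [finrank_span_eq_card hindep, Fintype.card_fin]
            _ ≤ Module.finrank ℂ (f.maxGenEigenspace 0) := Submodule.finrank_mono hle
            _ = 1 := hfin
        omega
      · have hdet : ((algebraMap ℂ (Matrix (Fin n) (Fin n) ℂ)) μ - L).det = 0 := by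
          rw [← Matrix.exists_mulVec_eq_zero_iff]
          refine ⟨u, hu0, ?_⟩
          rw [Matrix.sub_mulVec, Algebra.algebraMap_eq_smul_one, Matrix.smul_mulVec,
            Matrix.one_mulVec, hLu, sub_self]
        have hspecL : μ ∈ spectrum ℂ L := by
          rw [spectrum.mem_iff]
          intro hunit
          rw [Matrix.isUnit_iff_isUnit_det, hdet] at hunit
          simp at hunit
        exact hspec μ hspecL hμ0
  set y : Fin n → ℂ := x₀ - P.mulVec x₀ with hydef
  have hPy : P.mulVec y = 0 := by
    rw [hydef, Matrix.mulVec_sub, Matrix.mulVec_mulVec, hPP, sub_self]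
  have hkey : ∀ t : ℝ, (NormedSpace.exp (t • (-L))).mulVec x₀
      = P.mulVec x₀ + (NormedSpace.exp (t • (-M))).mulVec y := by
    intro t
    have hx0 : x₀ = P.mulVec x₀ + y := by rw [hydef]; abel
    have h1 : (NormedSpace.exp (t • (-L))).mulVec (P.mulVec x₀) = P.mulVec x₀ := by
      apply exp_mulVec_eq_self
      rw [Matrix.smul_mulVec, Matrix.neg_mulVec, Matrix.mulVec_mulVec, hLP,
        Matrix.zero_mulVec, neg_zero, smul_zero]
    have hcomm : Commute (t • (-L)) (t • (-P)) := by
      have hc : Commute (-L) (-P) := by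
        show (-L) * (-P) = (-P) * (-L)
        rw [neg_mul_neg, neg_mul_neg, hLP, hPL]
      exact (hc.smul_left t).smul_right t
    have h2 : (NormedSpace.exp (t • (-M))).mulVec y
        = (NormedSpace.exp (t • (-L))).mulVec y := by
      have hinner : (t • (-P)).mulVec y = 0 := by
        rw [Matrix.smul_mulVec, Matrix.neg_mulVec, hPy, neg_zero, smul_zero]
      have hsplit : t • (-M) = t • (-L) + t • (-P) := by
        rw [hMdef, neg_add, smul_add]
      rw [hsplit, Matrix.exp_add_of_commute _ _ hcomm, ← Matrix.mulVec_mulVec,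
        exp_mulVec_eq_self _ y hinner]
    calc (NormedSpace.exp (t • (-L))).mulVec x₀
        = (NormedSpace.exp (t • (-L))).mulVec (P.mulVec x₀)
          + (NormedSpace.exp (t • (-L))).mulVec y := by
          rw [← Matrix.mulVec_add, ← hx0]
      _ = P.mulVec x₀ + (NormedSpace.exp (t • (-M))).mulVec y := by rw [h1, h2]
  have hlim := tendsto_zero_of_eigen_pos M hM y
  have hadd : Tendsto (fun t : ℝ => P.mulVec x₀ + (NormedSpace.exp (t • (-M))).mulVec y)
      atTop (𝓝 (P.mulVec x₀ + 0)) := tendsto_const_nhds.add hlim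
  rw [add_zero] at hadd
  have hfinal := hadd.congr fun t => (hkey t).symm
  have hPval : P.mulVec x₀ = fun _ => α * (star w ⬝ᵥ x₀) := by
    rw [hPx]
    funext i
    simp only [Pi.smul_apply, smul_eq_mul, hvdef]
    ring
  rwa [hPval] at hfinal
end

section
/- Conversely, if the Laplacian flow ẋ = −Lx with L𝟙ₙ = 0 converges, for every initial condition, to a point of span{𝟙ₙ} which is nonzero for generic initial conditions, then 0 is a simple eigenvalue of L and every other eigenvalue of L has strictly positive real part. -/
open Matrix Filter

open NormedSpace Nat in

lemma exp_mulVec_tsum {n : ℕ} (A : Matrix (Fin n) (Fin n) ℂ) (v : Fin n → ℂ) :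
    (exp A).mulVec v = ∑' (k : ℕ), (((k )!: ℂ)⁻¹ • (A ^ k).mulVec v) := by
  letI : SeminormedRing (Matrix (Fin n) (Fin n) ℂ) := Matrix.linftyOpSemiNormedRing
  letI : NormedRing (Matrix (Fin n) (Fin n) ℂ) := Matrix.linftyOpNormedRing
  letI : NormedAlgebra ℂ (Matrix (Fin n) (Fin n) ℂ) := Matrix.linftyOpNormedAlgebra
  have hsum : Summable fun k : ℕ => ((k )!: ℂ)⁻¹ • A ^ k := expSeries_summable' A
  let f : Matrix (Fin n) (Fin n) ℂ →ₗ[ℂ] (Fin n → ℂ) :=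
    { toFun := fun M => M.mulVec v
      map_add' := fun M N => Matrix.add_mulVec M N v
      map_smul' := fun a M => smul_mulVec a M v }
  have hf : Continuous f := (continuous_id.matrix_mulVec continuous_const)
  let F : Matrix (Fin n) (Fin n) ℂ →L[ℂ] (Fin n → ℂ) := ⟨f, hf⟩
  have := F.map_tsum hsum
  rw [exp_eq_tsum (𝕂 := ℂ)]
  simpa [F, f] using this

open Filter Nat NormedSpace in

private lemma exp_mulVec_eigen {n : ℕ} (A : Matrix (Fin n) (Fin n) ℂ) (v : Fin n → ℂ) (μ : ℂ)
    (h : A.mulVec v = μ • v) : (exp A).mulVec v = Complex.exp μ • v := by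
  have hk : ∀ k : ℕ, (A ^ k).mulVec v = μ ^ k • v := by
    intro k
    induction k with
    | zero => simp
    | succ k ih =>
      rw [pow_succ, ← Matrix.mulVec_mulVec, h, Matrix.mulVec_smul, ih, smul_smul, pow_succ,
        mul_comm]
  have hsum : Summable fun k : ℕ => ((k)! : ℂ)⁻¹ * μ ^ k := by
    simpa [smul_eq_mul] using expSeries_summable' (𝕂 := ℂ) μ
  rw [exp_mulVec_tsum]
  simp_rw [hk, smul_smul]
  rw [hsum.tsum_smul_const, Complex.exp_eq_exp_ℂ, exp_eq_tsum (𝕂 := ℂ)]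
  simp [smul_eq_mul]

open Filter Nat NormedSpace in
private lemma exp_mulVec_of_sq {n : ℕ} (A : Matrix (Fin n) (Fin n) ℂ) (v : Fin n → ℂ)
    (h : A.mulVec (A.mulVec v) = 0) : (exp A).mulVec v = v + A.mulVec v := by
  have hk : ∀ k : ℕ, (A ^ (k + 2)).mulVec v = 0 := by
    intro k
    rw [pow_add, ← Matrix.mulVec_mulVec, pow_two, ← Matrix.mulVec_mulVec, h]
    simp
  rw [exp_mulVec_tsum]
  rw [tsum_eq_sum (s := {0, 1}) (by
    intro k hk'
    have h2 : 2 ≤ k := by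
      simp only [Finset.mem_insert, Finset.mem_singleton] at hk'
      omega
    obtain ⟨m, rfl⟩ : ∃ m, k = m + 2 := ⟨k - 2, by omega⟩
    rw [hk]; simp)]
  simp [Finset.sum_insert, Matrix.one_mulVec]

open Filter in

private lemma exp_tendsto_cases {z a : ℂ}
    (h : Tendsto (fun t : ℝ => Complex.exp (t * z)) atTop (nhds a)) :
    z = 0 ∨ z.re < 0 := by
  by_cases ha : a = 0
  · right
    subst ha
    have hnorm : Tendsto (fun t : ℝ => Real.exp (t * z.re)) atTop (nhds 0) := by
      have := h.norm
      simpa [Complex.norm_exp] using this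
    by_contra hre
    push_neg at hre
    have hge : ∀ᶠ t : ℝ in atTop, (1 : ℝ) ≤ Real.exp (t * z.re) := by
      filter_upwards [eventually_ge_atTop (0 : ℝ)] with t ht
      rw [← Real.exp_zero]
      exact Real.exp_le_exp.mpr (mul_nonneg ht hre)
    have : (1 : ℝ) ≤ 0 := ge_of_tendsto hnorm hge
    linarith
  · left
    have key : ∀ s : ℝ, Complex.exp (s * z) = 1 := by
      intro s
      have hts : Tendsto (fun t : ℝ => t + s) atTop atTop :=
        tendsto_atTop_add_const_right atTop s tendsto_id
      have h1 : Tendsto (fun t : ℝ => Complex.exp (s * z) * Complex.exp (t * z)) atTop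
          (nhds a) := by
        refine (h.comp hts).congr fun t => ?_
        show Complex.exp (((t + s : ℝ) : ℂ) * z) = _
        rw [← Complex.exp_add]
        push_cast
        ring_nf
      have h2 : Tendsto (fun t : ℝ => Complex.exp (s * z) * Complex.exp (t * z)) atTop
          (nhds (Complex.exp (s * z) * a)) := h.const_mul _
      have hu : Complex.exp (s * z) * a = a := tendsto_nhds_unique h2 h1
      exact mul_right_cancel₀ ha (hu.trans (one_mul a).symm)
    have hre : z.re = 0 := by
      have h1 := key 1
      have habs := congrArg (‖·‖) h1
      rw [Complex.norm_exp, norm_one] at habs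
      rw [← Real.exp_zero] at habs
      have := Real.exp_eq_exp.mp habs
      simpa using this
    have him : z.im = 0 := by
      by_contra him
      obtain ⟨k, hk⟩ := Complex.exp_eq_one_iff.mp (key (Real.pi / z.im))
      have him' := congrArg Complex.im hk
      simp [Complex.mul_im, hre] at him'
      rw [div_mul_cancel₀ _ him] at him'
      have h2k : Real.pi = (k : ℝ) * (2 * Real.pi) := him'
      have : (1 : ℝ) = (k : ℝ) * 2 := by
        have hpi := Real.pi_ne_zero
        field_simp at h2k
        nlinarith [Real.pi_pos]
      have : ((2 * k : ℤ) : ℝ) = ((1 : ℤ) : ℝ) := by push_cast; linarith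
      have := Int.cast_injective this
      omega
    exact Complex.ext hre him

open NormedSpace Nat in
/-- Conversely, if the Laplacian flow `exp(-Lt)` (with `L 𝟙 = 0`)
converges as `t → ∞` to the rank-one matrix `𝟙ₙ cᴴ` with `c ≠ 0` (so every initial
condition converges to a point of `span{𝟙ₙ}`, nonzero for generic initial
conditions), then `0` is a simple eigenvalue of `L` and every other eigenvalue has
strictly positive real part. -/

theorem simple_zero_eigenvalue_of_flow_consensus
    {n : ℕ} (L : Matrix (Fin n) (Fin n) ℂ)
    (hL : L.mulVec (fun _ => 1) = 0)
    (c : Fin n → ℂ) (hc : c ≠ 0)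
    (hconv : Tendsto (fun t : ℝ => NormedSpace.exp (t • (-L))) atTop
      (nhds (Matrix.of fun _ j => (starRingEnd ℂ) (c j)))) :
    L.charpoly.rootMultiplicity 0 = 1 ∧
    ∀ μ ∈ spectrum ℂ L, μ ≠ 0 → 0 < μ.re := by
  set P : Matrix (Fin n) (Fin n) ℂ := Matrix.of fun _ j => (starRingEnd ℂ) (c j) with hP
  -- convergence applied to vectors
  have hconmv : ∀ v : Fin n → ℂ,
      Tendsto (fun t : ℝ => (exp (t • (-L))).mulVec v) atTop (nhds (P.mulVec v)) := by
    intro v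
    exact ((continuous_id.matrix_mulVec continuous_const).tendsto P).comp hconv
  -- smul computation
  have hsm : ∀ (t : ℝ) (x : Fin n → ℂ), (t • (-L)).mulVec x = -((t : ℂ) • L.mulVec x) := by
    intro t x
    rw [smul_mulVec, Matrix.neg_mulVec]
    ext i
    simp [Complex.real_smul]
  -- eigenvector convergence
  have heig : ∀ (μ : ℂ) (v : Fin n → ℂ), L.mulVec v = μ • v →
      Tendsto (fun t : ℝ => Complex.exp ((t : ℂ) * (-μ)) • v) atTop (nhds (P.mulVec v)) := by
    intro μ v hv
    refine (hconmv v).congr fun t => ?_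
    rw [exp_mulVec_eigen (t • (-L)) v ((t : ℂ) * (-μ))]
    rw [hsm, hv]
    ext i
    simp
    ring
  -- kernel of L² is kernel of L
  have hker2 : ∀ x : Fin n → ℂ, L.mulVec (L.mulVec x) = 0 → L.mulVec x = 0 := by
    intro x hx
    by_contra hw
    obtain ⟨i, hwi0⟩ := Function.ne_iff.mp hw
    have hwi : (L.mulVec x) i ≠ 0 := by simpa using hwi0
    have hside : ∀ t : ℝ, (t • (-L)).mulVec ((t • (-L)).mulVec x) = 0 := by
      intro t
      rw [hsm t x, Matrix.mulVec_neg, Matrix.mulVec_smul, hsm, hx]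
      simp
    have hflow : ∀ t : ℝ, (exp (t • (-L))).mulVec x = x - (t : ℂ) • L.mulVec x := by
      intro t
      rw [exp_mulVec_of_sq _ _ (hside t), hsm, sub_eq_add_neg]
    have h1 : Tendsto (fun t : ℝ => x - (t : ℂ) • L.mulVec x) atTop (nhds (P.mulVec x)) :=
      (hconmv x).congr fun t => hflow t
    have h2 : Tendsto (fun t : ℝ => x i - (t : ℂ) * L.mulVec x i) atTop
        (nhds (P.mulVec x i)) := by
      have := ((continuous_apply i).tendsto (P.mulVec x)).comp h1
      simpa [smul_eq_mul, Function.comp_def] using this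
    have h3 : Tendsto (fun t : ℝ => (t : ℂ)) atTop
        (nhds ((x i - P.mulVec x i) * (L.mulVec x i)⁻¹)) := by
      have h4 : Tendsto (fun t : ℝ => (x i - (x i - (t : ℂ) * L.mulVec x i)) * (L.mulVec x i)⁻¹)
          atTop (nhds ((x i - P.mulVec x i) * (L.mulVec x i)⁻¹)) :=
        ((tendsto_const_nhds.sub h2).mul_const _)
      refine h4.congr fun t => ?_
      rw [sub_sub_cancel, mul_inv_cancel_right₀ hwi]
    have h5 : Tendsto (fun t : ℝ => ‖(t : ℂ)‖) atTop atTop := by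
      refine tendsto_abs_atTop_atTop.congr fun t => ?_
      simp
    exact not_tendsto_nhds_of_tendsto_atTop h5 _ h3.norm
  -- Fin n nonempty and ones ≠ 0
  obtain ⟨j₀, hj₀⟩ := Function.ne_iff.mp hc
  have hones : (fun _ : Fin n => (1 : ℂ)) ≠ 0 := by
    intro h
    have := congrFun h j₀
    simp at this
  -- kernel of L is span of ones
  have hkerspan : ∀ x : Fin n → ℂ, L.mulVec x = 0 →
      x ∈ Submodule.span ℂ {fun _ : Fin n => (1 : ℂ)} := by
    intro x hx
    have hconst : ∀ t : ℝ, (exp (t • (-L))).mulVec x = x := by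
      intro t
      rw [exp_mulVec_eigen (t • (-L)) x 0 (by rw [hsm, hx]; simp)]
      simp
    have : P.mulVec x = x :=
      tendsto_nhds_unique ((hconmv x).congr fun t => hconst t) tendsto_const_nhds
    rw [Submodule.mem_span_singleton]
    refine ⟨∑ j, (starRingEnd ℂ) (c j) * x j, ?_⟩
    funext i
    have h6 := congrFun this i
    simp only [Matrix.mulVec, dotProduct, hP, Matrix.of_apply] at h6
    simpa [Pi.smul_apply, smul_eq_mul] using h6
  set f : Module.End ℂ (Fin n → ℂ) := Matrix.toLinAlgEquiv' L with hf
  have hfapp : ∀ x : Fin n → ℂ, f x = L.mulVec x := fun x => rfl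
  constructor
  · -- part 1
    have hchar : f.charpoly = L.charpoly := by
      rw [← LinearMap.charpoly_toMatrix f (Pi.basisFun ℂ (Fin n)),
        LinearMap.toMatrix_eq_toMatrix']
      congr 1
      exact LinearMap.toMatrix'_toLin' L
    have hind : ∀ (k : ℕ) (x : Fin n → ℂ), (f ^ k) x = 0 → L.mulVec x = 0 := by
      intro k
      induction k with
      | zero =>
        intro x hx0
        simp only [pow_zero, Module.End.one_apply] at hx0
        rw [hx0, Matrix.mulVec_zero]
      | succ k ih =>
        intro x hx0
        rw [pow_succ, Module.End.mul_apply] at hx0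
        have := ih _ hx0
        rw [hfapp] at this
        exact hker2 x this
    have hms : f.maxGenEigenspace 0 = Submodule.span ℂ {(fun _ : Fin n => (1 : ℂ))} := by
      apply le_antisymm
      · intro x hx
        rw [Module.End.mem_maxGenEigenspace] at hx
        obtain ⟨k, hk⟩ := hx
        simp only [zero_smul, sub_zero] at hk
        exact hkerspan x (hind k x hk)
      · rw [Submodule.span_le, Set.singleton_subset_iff]
        rw [SetLike.mem_coe, Module.End.mem_maxGenEigenspace]
        refine ⟨1, ?_⟩
        simp only [zero_smul, sub_zero, pow_one, hfapp, hL]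
    calc L.charpoly.rootMultiplicity 0 = L.charpoly.natTrailingDegree :=
          Polynomial.rootMultiplicity_eq_natTrailingDegree'
      _ = f.charpoly.natTrailingDegree := by rw [hchar]
      _ = Module.finrank ℂ (f.maxGenEigenspace 0) :=
          (LinearMap.finrank_maxGenEigenspace_zero_eq f).symm
      _ = 1 := by rw [hms]; exact finrank_span_singleton hones
  · -- part 2
    intro μ hμ hμ0
    rw [← AlgEquiv.spectrum_eq (Matrix.toLinAlgEquiv' (R := ℂ) (n := Fin n))] at hμ
    have hev : Module.End.HasEigenvalue f μ :=
      Module.End.hasEigenvalue_iff_mem_spectrum.mpr hμ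
    obtain ⟨v, hv⟩ := hev.exists_hasEigenvector
    have hveq : L.mulVec v = μ • v := by
      have := hv.apply_eq_smul
      rwa [hfapp] at this
    obtain ⟨i, hvi0⟩ := Function.ne_iff.mp hv.2
    have hvi : v i ≠ 0 := by simpa using hvi0
    have h1 := heig μ v hveq
    have h2 : Tendsto (fun t : ℝ => Complex.exp ((t : ℂ) * (-μ)) * v i) atTop
        (nhds (P.mulVec v i)) := by
      have := ((continuous_apply i).tendsto (P.mulVec v)).comp h1
      simpa [smul_eq_mul, Function.comp_def] using this
    have h3 : Tendsto (fun t : ℝ => Complex.exp ((t : ℂ) * (-μ))) atTop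
        (nhds (P.mulVec v i * (v i)⁻¹)) := by
      have := h2.mul_const (v i)⁻¹
      refine this.congr fun t => ?_
      rw [mul_inv_cancel_right₀ hvi]
    rcases exp_tendsto_cases h3 with h | h
    · exact absurd (neg_eq_zero.mp h) hμ0
    · simpa using h
end
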